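/- If ν₁, ν₂, ν₃ are independent Discrete Laplace random variables with parameter ε, then their sum ν₁+ν₂+ν₃ has the same distribution as the sum of n independent differences Polya(3/n, e^{−ε}) − Polya(3/n, e^{−ε}). -/

import Mathlib

open MeasureTheory ProbabilityTheory

/-! Write `p = e^{-ε}`. Summing the geometric series over the pairs `(a, b)` with `a - b = z`
shows that `DLap` is the law of the difference of two independent geometric, i.e.
`Polya(1, p)`, variables. The laws `Polya(r, p)` form a convolution semigroup in `r`:
`Polya(r, p) ∗ Polya(s, p) = Polya(r + s, p)` is the Chu–Vandermonde identity for the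
coefficients `Γ(j + r) / (j! Γ(r)) = multichoose r j`. Hence both `ν₁ + ν₂ + ν₃` and
`∑ᵢ (X (inl i) - X (inr i)) = ∑ᵢ X (inl i) - ∑ᵢ X (inr i)` have the law of the difference of
two independent `Polya(3, p)` variables. -/

open Finset Polynomial

theorem Ring.multichoose_add {R : Type*} [Ring R] [BinomialRing R] {r s : R} (k : ℕ)
    (h : Commute r s) :
    Ring.multichoose (r + s) k =
      ∑ ij ∈ antidiagonal k, Ring.multichoose r ij.1 * Ring.multichoose s ij.2 := by
  have hneg (t : R) (n : ℕ) :
      Ring.multichoose t n = (n : ℤ).negOnePow • Ring.choose (-t) n := by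
    rw [Ring.choose_neg', smul_smul, Int.units_mul_self, one_smul]
  rw [hneg, neg_add, Ring.add_choose_eq k h.neg_left.neg_right, smul_sum]
  refine sum_congr rfl fun ij hij => ?_
  rw [hneg, hneg, ← mem_antidiagonal.mp hij, Nat.cast_add, Int.negOnePow_add,
    smul_mul_smul_comm]

theorem Real.Gamma_nat_add {r : ℝ} (hr : 0 < r) (j : ℕ) :
    Real.Gamma (j + r) = (ascPochhammer ℕ j).smeval r * Real.Gamma r := by
  induction j with
  | zero => simp [smeval_one]
  | succ j ih =>
    rw [Nat.cast_succ, add_right_comm, Real.Gamma_add_one (by positivity), ih,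
      ascPochhammer_succ_right, smeval_mul]
    simp only [ascPochhammer_smeval_cast, smeval_add, smeval_X, pow_one, smeval_natCast, pow_zero,
      nsmul_eq_mul, mul_one]
    ring

noncomputable section

def polyaMass (r p : ℝ) (j : ℕ) : ℝ :=
  Real.Gamma (j + r) / (Real.Gamma (j + 1) * Real.Gamma r) * p ^ j * (1 - p) ^ r

theorem polyaMass_eq_multichoose {r : ℝ} (hr : 0 < r) (p : ℝ) (j : ℕ) :
    polyaMass r p j = Ring.multichoose r j * p ^ j * (1 - p) ^ r := by
  have hj : (j.factorial : ℝ) ≠ 0 := by positivity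
  rw [polyaMass, Real.Gamma_nat_add hr, Real.Gamma_nat_eq_factorial,
    ← Ring.factorial_nsmul_multichoose_eq_ascPochhammer, nsmul_eq_mul,
    mul_div_mul_right _ _ (Real.Gamma_pos_of_pos hr).ne', mul_div_cancel_left₀ _ hj]

theorem polyaMass_nonneg {r p : ℝ} (hr : 0 < r) (hp0 : 0 ≤ p) (hp1 : p ≤ 1) (j : ℕ) :
    0 ≤ polyaMass r p j := by
  have hΓr := Real.Gamma_pos_of_pos hr
  have hΓjr : 0 < Real.Gamma (j + r) := Real.Gamma_pos_of_pos (by positivity)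
  have hΓj : 0 < Real.Gamma (j + 1) := Real.Gamma_pos_of_pos (by positivity)
  have hq : 0 ≤ (1 - p) ^ r := Real.rpow_nonneg (by linarith) r
  unfold polyaMass
  positivity

theorem polyaMass_one (p : ℝ) (j : ℕ) : polyaMass 1 p j = (1 - p) * p ^ j := by
  rw [polyaMass_eq_multichoose one_pos, Ring.multichoose_one, Real.rpow_one]
  ring

theorem sum_antidiagonal_polyaMass_mul {r s p : ℝ} (hr : 0 < r) (hs : 0 < s) (hp : p ≤ 1)
    (k : ℕ) :
    ∑ ij ∈ antidiagonal k, polyaMass r p ij.1 * polyaMass s p ij.2 = polyaMass (r + s) p k := by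
  have hpow : ∀ ij ∈ antidiagonal k, polyaMass r p ij.1 * polyaMass s p ij.2 =
      Ring.multichoose r ij.1 * Ring.multichoose s ij.2 * (p ^ k * (1 - p) ^ (r + s)) := by
    intro ij hij
    rw [polyaMass_eq_multichoose hr, polyaMass_eq_multichoose hs, ← mem_antidiagonal.mp hij,
      pow_add, Real.rpow_add' (by linarith) (by positivity)]
    ring
  rw [sum_congr rfl hpow, ← sum_mul, ← Ring.multichoose_add k (Commute.all r s),
    polyaMass_eq_multichoose (by positivity), mul_assoc]

def massMeasure {α : Type*} [MeasurableSpace α] (f : α → ℝ) : Measure α :=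
  Measure.sum fun a => ENNReal.ofReal (f a) • Measure.dirac a

section massMeasure

variable {α : Type*} [MeasurableSpace α] [MeasurableSingletonClass α]

theorem massMeasure_singleton (f : α → ℝ) (a : α) :
    massMeasure f {a} = ENNReal.ofReal (f a) := by
  classical
  simp [massMeasure, Measure.sum_apply _ (measurableSet_singleton a), Measure.dirac_apply',
    Set.indicator_apply]

theorem map_eq_massMeasure [Countable α] {Ω : Type*} [MeasurableSpace Ω] {μ : Measure Ω}
    [IsFiniteMeasure μ] {X : Ω → α} (hX : Measurable X) {f : α → ℝ}
    (h : ∀ a, (μ {ω | X ω = a}).toReal = f a) : μ.map X = massMeasure f :=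
  Measure.ext_of_singleton fun a => by
    rw [Measure.map_apply hX (measurableSet_singleton a), massMeasure_singleton, ← h a,
      ENNReal.ofReal_toReal (measure_ne_top μ _)]
    rfl

end massMeasure

namespace MeasureTheory.Measure

theorem conv_singleton {M : Type*} [AddMonoid M] [HasAntidiagonal M] [MeasurableSpace M]
    [MeasurableSingletonClass M] [MeasurableAdd₂ M] (μ ν : Measure M) [SFinite ν] (n : M) :
    (μ ∗ ν) {n} = ∑ ij ∈ antidiagonal n, μ {ij.1} * ν {ij.2} := by
  have hpre : (fun q : M × M => q.1 + q.2) ⁻¹' {n} = ↑(antidiagonal n) := by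
    ext q; simp
  rw [Measure.conv, Measure.map_apply measurable_add (measurableSet_singleton n), hpre,
    ← sum_measure_singleton]
  refine Finset.sum_congr rfl fun ij _ => ?_
  rw [← Set.singleton_prod_singleton, Measure.prod_prod]

theorem conv_conv_conv_comm {M : Type*} [AddCommMonoid M] [MeasurableSpace M]
    [MeasurableAdd₂ M] (μ ν ρ τ : Measure M) [SFinite μ] [SFinite ν] [SFinite ρ] [SFinite τ] :
    (μ ∗ ν) ∗ (ρ ∗ τ) = (μ ∗ ρ) ∗ (ν ∗ τ) := by
  rw [Measure.conv_assoc, Measure.conv_assoc, ← Measure.conv_assoc ν, Measure.conv_comm ν ρ,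
    Measure.conv_assoc]

end MeasureTheory.Measure

def polya (r p : ℝ) : Measure ℕ := massMeasure (polyaMass r p)

theorem polya_conv {r s p : ℝ} (hr : 0 < r) (hs : 0 < s) (hp0 : 0 ≤ p) (hp1 : p ≤ 1) :
    polya r p ∗ polya s p = polya (r + s) p := by
  refine Measure.ext_of_singleton fun k => ?_
  simp only [polya, Measure.conv_singleton, massMeasure_singleton]
  rw [← sum_antidiagonal_polyaMass_mul hr hs hp1,
    ENNReal.ofReal_sum_of_nonneg fun ij _ =>
      mul_nonneg (polyaMass_nonneg hr hp0 hp1 _) (polyaMass_nonneg hs hp0 hp1 _)]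
  exact sum_congr rfl fun ij _ => (ENNReal.ofReal_mul (polyaMass_nonneg hr hp0 hp1 _)).symm

def natDiff (μ ν : Measure ℕ) : Measure ℤ := (μ.prod ν).map fun q => (q.1 : ℤ) - q.2

theorem natDiff_eq_conv (μ ν : Measure ℕ) [SFinite μ] [SFinite ν] :
    natDiff μ ν = μ.map (Nat.cast : ℕ → ℤ) ∗ ν.map (fun k : ℕ => -(k : ℤ)) := by
  rw [Measure.conv, Measure.map_prod_map _ _ measurable_from_top measurable_from_top,
    Measure.map_map measurable_add .of_discrete]
  rfl

theorem natDiff_conv (μ ν μ' ν' : Measure ℕ) [SFinite μ] [SFinite ν] [SFinite μ']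
    [SFinite ν'] :
    natDiff μ ν ∗ natDiff μ' ν' = natDiff (μ ∗ μ') (ν ∗ ν') := by
  have hcast := Measure.map_conv_addMonoidHom (μ := μ) (ν := μ')
    (Nat.castAddMonoidHom ℤ) .of_discrete
  have hneg := Measure.map_conv_addMonoidHom (μ := ν) (ν := ν')
    (negAddMonoidHom.comp (Nat.castAddMonoidHom ℤ)) .of_discrete
  simp only [AddMonoidHom.coe_comp, Nat.coe_castAddMonoidHom, Function.comp_def,
    negAddMonoidHom_apply] at hcast hneg
  rw [natDiff_eq_conv, natDiff_eq_conv, natDiff_eq_conv, hcast, hneg,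
    Measure.conv_conv_conv_comm]

theorem natDiff_polya_conv {r s p : ℝ} (hr : 0 < r) (hs : 0 < s) (hp0 : 0 ≤ p) (hp1 : p ≤ 1) :
    natDiff (polya r p) (polya r p) ∗ natDiff (polya s p) (polya s p) =
      natDiff (polya (r + s) p) (polya (r + s) p) := by
  rw [natDiff_conv, polya_conv hr hs hp0 hp1]

theorem natDiff_singleton (μ ν : Measure ℕ) [SFinite ν] (z : ℤ) :
    natDiff μ ν {z} = ∑' m : ℕ, μ {m + z.toNat} * ν {m + (-z).toNat} := by
  have hpre : (fun q : ℕ × ℕ => (q.1 : ℤ) - q.2) ⁻¹' {z} =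
      ⋃ m : ℕ, {(m + z.toNat, m + (-z).toNat)} := by
    ext ⟨a, b⟩
    simp only [Set.mem_preimage, Set.mem_singleton_iff, Set.mem_iUnion, Prod.mk.injEq]
    constructor
    · intro h
      exact ⟨min a b, by omega, by omega⟩
    · rintro ⟨m, rfl, rfl⟩
      push_cast
      omega
  have hdisj : Pairwise (Function.onFun Disjoint
      fun m : ℕ => ({(m + z.toNat, m + (-z).toNat)} : Set (ℕ × ℕ))) := by
    intro m m' hm
    simp [Function.onFun, hm]
  rw [natDiff, Measure.map_apply .of_discrete (measurableSet_singleton z), hpre,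
    measure_iUnion hdisj fun _ => measurableSet_singleton _]
  simp_rw [← Set.singleton_prod_singleton, Measure.prod_prod]

def discreteLaplaceMass (ε : ℝ) (z : ℤ) : ℝ :=
  (1 - Real.exp (-ε)) / (1 + Real.exp (-ε)) * Real.exp (-ε * |(z : ℝ)|)

theorem natDiff_polya_one_singleton {p : ℝ} (hp0 : 0 ≤ p) (hp1 : p < 1) (z : ℤ) :
    natDiff (polya 1 p) (polya 1 p) {z} =
      ENNReal.ofReal ((1 - p) / (1 + p) * p ^ z.natAbs) := by
  have hterm (m : ℕ) : ENNReal.ofReal (polyaMass 1 p (m + z.toNat)) *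
      ENNReal.ofReal (polyaMass 1 p (m + (-z).toNat)) =
      ENNReal.ofReal ((1 - p) ^ 2 * p ^ z.natAbs * (p ^ 2) ^ m) := by
    rw [← ENNReal.ofReal_mul (polyaMass_nonneg one_pos hp0 hp1.le _), polyaMass_one,
      polyaMass_one, ← pow_mul, show z.natAbs = z.toNat + (-z).toNat by omega]
    ring_nf
  have hp2 : p ^ 2 < 1 := by nlinarith
  simp only [natDiff_singleton, polya, massMeasure_singleton, hterm]
  rw [← ENNReal.ofReal_tsum_of_nonneg (fun m => by positivity)
    ((summable_geometric_of_lt_one (by positivity) hp2).mul_left _), tsum_mul_left,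
    tsum_geometric_of_lt_one (by positivity) hp2]
  have h1 : 1 - p ≠ 0 := by linarith
  have h2 : 1 + p ≠ 0 := by linarith
  rw [show 1 - p ^ 2 = (1 - p) * (1 + p) by ring]
  field_simp

theorem massMeasure_discreteLaplaceMass_eq_natDiff {ε : ℝ} (hε : 0 < ε) :
    massMeasure (discreteLaplaceMass ε) =
      natDiff (polya 1 (Real.exp (-ε))) (polya 1 (Real.exp (-ε))) := by
  refine Measure.ext_of_singleton fun z => ?_
  rw [massMeasure_singleton, natDiff_polya_one_singleton (Real.exp_pos _).le
    (Real.exp_lt_one_iff.mpr (by linarith)), discreteLaplaceMass, ← Real.exp_nat_mul,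
    Nat.cast_natAbs, Int.cast_abs]
  ring_nf

namespace ProbabilityTheory

variable {Ω : Type*} [MeasurableSpace Ω] {μ : Measure Ω}

theorem IndepFun.map_natCast_sub_eq_natDiff [IsFiniteMeasure μ] {X Y : Ω → ℕ}
    (hX : Measurable X) (hY : Measurable Y) (hXY : IndepFun X Y μ) :
    μ.map (fun ω => (X ω : ℤ) - Y ω) = natDiff (μ.map X) (μ.map Y) := by
  rw [natDiff, ← (indepFun_iff_map_prod_eq_prod_map_map hX.aemeasurable hY.aemeasurable).mp hXY,
    Measure.map_map .of_discrete (hX.prodMk hY)]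
  rfl

variable {ι M : Type*} [AddCommMonoid M] [MeasurableSpace M] [MeasurableAdd₂ M]
  {Y : ι → Ω → M}

theorem iIndepFun.indepFun_finsetSum_finsetSum (hind : iIndepFun Y μ)
    (hY : ∀ i, Measurable (Y i)) {s t : Finset ι} (hst : Disjoint s t) :
    IndepFun (∑ i ∈ s, Y i) (∑ i ∈ t, Y i) μ := by
  have h := (hind.indepFun_finset s t hst hY).comp
    (measurable_sum univ fun i _ => measurable_pi_apply i)
    (measurable_sum univ fun i _ => measurable_pi_apply i)
  convert h using 1 <;> ext ω <;> simpa using (sum_attach _ _).symm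

theorem iIndepFun.map_finsetSum_eq_of_conv [IsFiniteMeasure μ] (hind : iIndepFun Y μ)
    (hY : ∀ i, Measurable (Y i)) (m : ℝ → Measure M)
    (hm : ∀ r s, 0 < r → 0 < s → m r ∗ m s = m (r + s))
    {r : ι → ℝ} (hr : ∀ i, 0 < r i) (hlaw : ∀ i, μ.map (Y i) = m (r i))
    {s : Finset ι} (hs : s.Nonempty) : μ.map (∑ i ∈ s, Y i) = m (∑ i ∈ s, r i) := by
  induction hs using Finset.Nonempty.cons_induction with
  | singleton a => simpa using hlaw a
  | cons a s ha hs ih =>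
    rw [sum_cons, sum_cons, add_comm, add_comm (r a),
      IndepFun.map_add_eq_map_conv_map (by fun_prop) (hY a)
        (hind.indepFun_finsetSum_of_notMem hY ha), ih, hlaw,
      hm _ _ (sum_pos (fun i _ => hr i) hs) (hr a)]

end ProbabilityTheory

end

/-- If `ν₁, ν₂, ν₃` are independent Discrete Laplace random variables with parameter `ε`
(mass at `z ∈ ℤ` equal to `((1−e^{−ε})/(1+e^{−ε}))·e^{−ε|z|}`), then `ν₁+ν₂+ν₃` has the
same distribution as the sum of `n` independent differences
`Polya(3/n, e^{−ε}) − Polya(3/n, e^{−ε})`, where `Polya(r,p)` has mass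
`Pr[X=j] = (Γ(j+r)/(Γ(j+1)Γ(r)))·p^j·(1−p)^r`. -/
theorem three_discrete_laplace_eq_sum_polya_differences
    {Ω₁ Ω₂ : Type*} [MeasureSpace Ω₁] [MeasureSpace Ω₂]
    [IsProbabilityMeasure (ℙ : Measure Ω₁)] [IsProbabilityMeasure (ℙ : Measure Ω₂)]
    (ε : ℝ) (hε : 0 < ε) (n : ℕ) (hn : 0 < n)
    (ν : Fin 3 → Ω₁ → ℤ) (hνmeas : ∀ i, Measurable (ν i))
    (hνindep : iIndepFun ν ℙ)
    (hνlaw : ∀ i, ∀ z : ℤ,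
      ((ℙ : Measure Ω₁) {ω | ν i ω = z}).toReal =
        ((1 - Real.exp (-ε)) / (1 + Real.exp (-ε))) * Real.exp (-ε * |(z : ℝ)|))
    (X : Fin n ⊕ Fin n → Ω₂ → ℕ) (hXmeas : ∀ i, Measurable (X i))
    (hXindep : iIndepFun X ℙ)
    (hXlaw : ∀ i, ∀ j : ℕ,
      ((ℙ : Measure Ω₂) {ω | X i ω = j}).toReal =
        Real.Gamma (j + 3 / n) / (Real.Gamma (j + 1) * Real.Gamma (3 / n)) *
          Real.exp (-ε) ^ j * (1 - Real.exp (-ε)) ^ ((3 : ℝ) / n)) :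
    Measure.map (fun ω => ν 0 ω + ν 1 ω + ν 2 ω) ℙ =
      Measure.map (fun ω => ∑ i : Fin n, ((X (Sum.inl i) ω : ℤ) - (X (Sum.inr i) ω : ℤ))) ℙ := by
  set p := Real.exp (-ε)
  have hp0 : 0 ≤ p := (Real.exp_pos _).le
  have hp1 : p ≤ 1 := Real.exp_le_one_iff.mpr (by linarith)
  have hν : Measure.map (∑ i, ν i) ℙ = natDiff (polya 3 p) (polya 3 p) := by
    rw [hνindep.map_finsetSum_eq_of_conv hνmeas (fun r => natDiff (polya r p) (polya r p))
      (fun _ _ hr hs => natDiff_polya_conv hr hs hp0 hp1) (fun _ => one_pos)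
      (fun i => (map_eq_massMeasure (hνmeas i) (hνlaw i)).trans
        (massMeasure_discreteLaplaceMass_eq_natDiff hε)) univ_nonempty]
    norm_num
  have hX (s : Finset (Fin n ⊕ Fin n)) (hs : s.card = n) :
      Measure.map (∑ i ∈ s, X i) ℙ = polya 3 p := by
    rw [hXindep.map_finsetSum_eq_of_conv hXmeas (polya · p)
      (fun _ _ hr hs => polya_conv hr hs hp0 hp1) (fun _ => by positivity)
      (fun i => map_eq_massMeasure (hXmeas i) (hXlaw i)) (card_pos.mp (hs.symm ▸ hn)),
      sum_const, hs, nsmul_eq_mul, mul_div_cancel₀ _ (by positivity)]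
  set S := ∑ i ∈ univ.map Function.Embedding.inl, X i
  set T := ∑ i ∈ univ.map Function.Embedding.inr, X i
  calc Measure.map (fun ω => ν 0 ω + ν 1 ω + ν 2 ω) ℙ
      = natDiff (Measure.map S ℙ) (Measure.map T ℙ) := by
        rw [hX _ (by simp), hX _ (by simp), ← hν]
        congr 1
        ext ω
        simp [Fin.sum_univ_three]
    _ = Measure.map (fun ω => (S ω : ℤ) - T ω) ℙ :=
        (IndepFun.map_natCast_sub_eq_natDiff (by fun_prop) (by fun_prop)
          (hXindep.indepFun_finsetSum_finsetSum hXmeas (disjoint_map_inl_map_inr _ _))).symm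
    _ = _ := by
        congr 1
        ext ω
        simp [S, T, sum_sub_distrib]
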